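/- Let X be a separable metric space with a locally finite Borel measure μ with support X, N ≥ 1, and K : X × X → ℝ^{N×N} bounded, continuous, with K(x,y) = K(y,x)ᵀ for all x,y. Then the following are equivalent: (i) K is positive definite (for all n, x₁,…,xₙ ∈ X, c₁,…,cₙ ∈ ℝ^N: ∑_{i,j} cᵢᵀ K(xᵢ,xⱼ) cⱼ ≥ 0); (ii) ∫_X∫_X f(x)ᵀ K(x,y) f(y) dμ dμ ≥ 0 for all f ∈ C(X,ℝ^N) ∩ L¹(X,ℝ^N); (iii) ∫_X∫_X f(x)ᵀ K(x,y) f(y) dμ dμ ≥ 0 for all f ∈ L¹(X,ℝ^N). -/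

import Mathlib

/-!
(iii) ⇒ (ii) is trivial. The other two implications hold for any bounded continuous kernel `k`
of bilinear forms on a real Banach space; a matrix kernel becomes one through `⟪u, K v⟫`.

(ii) ⇒ (i): test (ii) against `f = ∑ᵢ ψᵢ • cᵢ`, where `ψᵢ` is a tent of radius `δ` at `xᵢ`
normalized to mass one (possible because `μ` is locally finite and charges every ball). The double
integral is `∑ᵢⱼ ∫ ψᵢ(a) ψⱼ(b) k(a,b)(cᵢ,cⱼ)`, and `ψᵢ ⊗ ψⱼ` is a peak function at `(xᵢ, xⱼ)`,
so as `δ → 0` this tends to `∑ᵢⱼ k(xᵢ,xⱼ)(cᵢ,cⱼ)`.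

(i) ⇒ (iii): take simple functions `cₙ : X → X` converging pointwise to the identity. For the
kernel `k(cₙ a, cₙ b)` the double integral collapses to the finite sum `∑ k(p,q)(ν_p, ν_q)` over
the range of `cₙ`, with `ν_p = ∫_{cₙ⁻¹{p}} f`, which is nonnegative by (i); dominated convergence,
with dominating function `C ‖f a‖ ‖f b‖`, passes to the limit.
-/

open MeasureTheory Matrix

/-- Frobenius norm of a real `N × N` matrix. -/
noncomputable def frobNorm {N : ℕ} (A : Matrix (Fin N) (Fin N) ℝ) : ℝ :=
  Real.sqrt (∑ i : Fin N, ∑ j : Fin N, (A i j) ^ 2)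

open Filter Topology Metric
open scoped ENNReal

lemma tendsto_integral_mul_of_support_subset_ball {ι Y : Type*} [PseudoMetricSpace Y]
    [MeasurableSpace Y] {ν : Measure Y} {l : Filter ι} {φ : ι → Y → ℝ} {y₀ : Y} {g : Y → ℝ}
    (hφ0 : ∀ᶠ i in l, 0 ≤ φ i) (hφint : ∀ᶠ i in l, Integrable (φ i) ν)
    (hφ1 : ∀ᶠ i in l, ∫ y, φ i y ∂ν = 1)
    (hφsupp : ∀ r > 0, ∀ᶠ i in l, Function.support (φ i) ⊆ ball y₀ r)
    (hgm : AEStronglyMeasurable g ν) (hg : ContinuousAt g y₀) :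
    Tendsto (fun i => ∫ y, φ i y * g y ∂ν) l (𝓝 (g y₀)) := by
  rw [Metric.tendsto_nhds]
  intro ε hε
  obtain ⟨r, hr, hgr⟩ := Metric.continuousAt_iff.1 hg (ε / 2) (half_pos hε)
  filter_upwards [hφ0, hφint, hφ1, hφsupp r hr] with i h0 hint h1 hsupp
  have hbound : ∀ y, ‖φ i y * (g y - g y₀)‖ ≤ ε / 2 * φ i y := by
    intro y
    by_cases hy : y ∈ ball y₀ r
    · rw [norm_mul, Real.norm_of_nonneg (h0 y), mul_comm]
      exact mul_le_mul_of_nonneg_right (hgr hy).le (h0 y)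
    · simp [Function.notMem_support.1 fun h => hy (hsupp h)]
  have hint' : Integrable (fun y => φ i y * (g y - g y₀)) ν :=
    (hint.const_mul (ε / 2)).mono' (hint.aestronglyMeasurable.mul
      (hgm.sub aestronglyMeasurable_const)) (ae_of_all _ hbound)
  have hsplit : ∫ y, φ i y * g y ∂ν = ∫ y, φ i y * (g y - g y₀) ∂ν + ∫ y, φ i y * g y₀ ∂ν := by
    rw [← integral_add hint' (hint.mul_const _)]
    simp only [mul_sub, sub_add_cancel]
  rw [dist_eq_norm, hsplit, integral_mul_const, h1, one_mul, add_sub_cancel_right]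
  calc ‖∫ y, φ i y * (g y - g y₀) ∂ν‖ ≤ ∫ y, ε / 2 * φ i y ∂ν :=
        norm_integral_le_of_norm_le (hint.const_mul _) (ae_of_all _ hbound)
    _ = ε / 2 := by rw [integral_const_mul, h1, mul_one]
    _ < ε := half_lt_self hε

section Tent

variable {X : Type*} [PseudoMetricSpace X]

def tent (x : X) (δ : ℝ) (z : X) : ℝ := max 0 (δ - dist z x)

lemma tent_nonneg (x : X) (δ : ℝ) : 0 ≤ tent x δ := fun _ => le_max_left _ _

lemma continuous_tent (x : X) (δ : ℝ) : Continuous (tent x δ) := by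
  unfold tent; fun_prop

lemma support_tent (x : X) (δ : ℝ) : Function.support (tent x δ) = ball x δ := by
  ext z
  simp [tent]

variable [MeasurableSpace X] {μ : Measure X}

variable (μ) in
noncomputable def normalizedTent (x : X) (δ : ℝ) (z : X) : ℝ :=
  (∫ w, tent x δ w ∂μ)⁻¹ * tent x δ z

lemma normalizedTent_nonneg (x : X) (δ : ℝ) : 0 ≤ normalizedTent μ x δ :=
  fun z => mul_nonneg (inv_nonneg.2 (integral_nonneg (tent_nonneg x δ))) (tent_nonneg x δ z)

lemma continuous_normalizedTent (x : X) (δ : ℝ) : Continuous (normalizedTent μ x δ) :=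
  continuous_const.mul (continuous_tent x δ)

lemma support_normalizedTent_subset (x : X) (δ : ℝ) :
    Function.support (normalizedTent μ x δ) ⊆ ball x δ :=
  (Function.support_mul_subset_right _ _).trans (support_tent x δ).subset

lemma eventually_measure_ball_ne_top [IsLocallyFiniteMeasure μ] (x : X) :
    ∀ᶠ δ in 𝓝 (0 : ℝ), μ (ball x δ) ≠ ∞ := by
  obtain ⟨s, hs, hμs⟩ := μ.finiteAt_nhds x
  obtain ⟨r, hr, hrs⟩ := Metric.mem_nhds_iff.1 hs
  filter_upwards [eventually_lt_nhds hr] with δ hδ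
  exact ((measure_mono ((ball_subset_ball hδ.le).trans hrs)).trans_lt hμs).ne

variable [OpensMeasurableSpace X]

lemma integrable_tent {x : X} {δ : ℝ} (h : μ (ball x δ) ≠ ∞) : Integrable (tent x δ) μ := by
  refine (integrableOn_iff_integrable_of_support_subset (support_tent x δ).subset).1 ?_
  refine Measure.integrableOn_of_bounded h (continuous_tent x δ).aestronglyMeasurable
    (M := |δ|) (ae_of_all _ fun z => ?_)
  rw [Real.norm_of_nonneg (tent_nonneg x δ z)]
  exact max_le (abs_nonneg δ) ((sub_le_self _ dist_nonneg).trans (le_abs_self δ))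

variable [IsLocallyFiniteMeasure μ]

lemma eventually_integrable_normalizedTent (x : X) :
    ∀ᶠ δ in 𝓝[>] (0 : ℝ), Integrable (normalizedTent μ x δ) μ :=
  nhdsWithin_le_nhds <| (eventually_measure_ball_ne_top x).mono fun _ h =>
    (integrable_tent h).const_mul _

lemma eventually_integral_normalizedTent (hsupp : ∀ U : Set X, IsOpen U → U.Nonempty → 0 < μ U)
    (x : X) : ∀ᶠ δ in 𝓝[>] (0 : ℝ), ∫ z, normalizedTent μ x δ z ∂μ = 1 := by
  filter_upwards [nhdsWithin_le_nhds (eventually_measure_ball_ne_top (μ := μ) x),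
    self_mem_nhdsWithin] with δ hfin (hδ : 0 < δ)
  have hpos : 0 < ∫ z, tent x δ z ∂μ := by
    rw [integral_pos_iff_support_of_nonneg (tent_nonneg x δ) (integrable_tent hfin), support_tent]
    exact hsupp _ isOpen_ball ⟨x, mem_ball_self hδ⟩
  simp only [normalizedTent]
  rw [integral_const_mul, inv_mul_cancel₀ hpos.ne']

end Tent

section Kernel

variable {X E : Type*} [NormedAddCommGroup E] [NormedSpace ℝ E]

/-- Positive definite in the paper's sense, i.e. only `0 ≤` is required. -/
def IsPosDefKernel (k : X → X → E →L[ℝ] E →L[ℝ] ℝ) : Prop :=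
  ∀ (n : ℕ) (x : Fin n → X) (c : Fin n → E), 0 ≤ ∑ i, ∑ j, k (x i) (x j) (c i) (c j)

lemma IsPosDefKernel.sum_finset_nonneg {k : X → X → E →L[ℝ] E →L[ℝ] ℝ} (hk : IsPosDefKernel k)
    (s : Finset X) (v : X → E) : 0 ≤ ∑ x ∈ s, ∑ y ∈ s, k x y (v x) (v y) := by
  have e := s.equivFin.symm
  convert hk s.card (fun i => e i) (fun i => v (e i)) using 1
  rw [← Finset.sum_coe_sort, ← e.sum_comp]
  refine Finset.sum_congr rfl fun i _ => ?_
  rw [← Finset.sum_coe_sort, ← e.sum_comp]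

variable [MeasurableSpace X] {μ : Measure X}

lemma integrable_prod_bilin_apply {κ : X × X → E →L[ℝ] E →L[ℝ] ℝ} {C : ℝ}
    (hκ : AEStronglyMeasurable κ (μ.prod μ)) (hκC : ∀ p, ‖κ p‖ ≤ C) {f : X → E}
    (hf : Integrable f μ) : Integrable (fun p : X × X => κ p (f p.1) (f p.2)) (μ.prod μ) := by
  have hev : Continuous fun q : (E →L[ℝ] E →L[ℝ] ℝ) × E × E => q.1 q.2.1 q.2.2 := by fun_prop
  refine ((hf.norm.mul_prod hf.norm).const_mul C).mono' ?_ (ae_of_all _ fun p => ?_)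
  · exact hev.comp_aestronglyMeasurable
      (hκ.prodMk (hf.aestronglyMeasurable.comp_fst.prodMk hf.aestronglyMeasurable.comp_snd))
  · rw [← mul_assoc]
    exact (κ p).le_of_opNorm₂_le_of_le (hκC p) le_rfl le_rfl

lemma integral_prod_bilin_comp_simpleFunc [SFinite μ] [CompleteSpace E]
    (k : X → X → E →L[ℝ] E →L[ℝ] ℝ) (c : SimpleFunc X X) {f : X → E} (hf : Integrable f μ) :
    ∫ p, k (c p.1) (c p.2) (f p.1) (f p.2) ∂μ.prod μ =
      ∑ x ∈ c.range, ∑ y ∈ c.range,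
        k x y (∫ a in c ⁻¹' {x}, f a ∂μ) (∫ b in c ⁻¹' {y}, f b ∂μ) := by
  have hfiber : ∀ x, Integrable ((c ⁻¹' {x}).indicator f) μ := fun x =>
    hf.indicator (c.measurableSet_fiber x)
  have hterm : ∀ x y, Integrable (fun p : X × X =>
      k x y ((c ⁻¹' {x}).indicator f p.1) ((c ⁻¹' {y}).indicator f p.2)) (μ.prod μ) :=
    fun x y => (hfiber x).op_fst_snd (by fun_prop) ⟨‖k x y‖, (k x y).le_opNorm₂⟩ (hfiber y)
  have hsplit : ∀ p : X × X, k (c p.1) (c p.2) (f p.1) (f p.2) = ∑ x ∈ c.range, ∑ y ∈ c.range,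
      k x y ((c ⁻¹' {x}).indicator f p.1) ((c ⁻¹' {y}).indicator f p.2) := by
    intro p
    rw [Finset.sum_eq_single_of_mem (c p.1) (c.mem_range_self _) fun x _ hx => ?_]
    · rw [Finset.sum_eq_single_of_mem (c p.2) (c.mem_range_self _) fun y _ hy => ?_]
      · simp
      · simp [Set.indicator_of_notMem (show p.2 ∉ c ⁻¹' {y} from Ne.symm hy)]
    · simp [Set.indicator_of_notMem (show p.1 ∉ c ⁻¹' {x} from Ne.symm hx)]
  simp_rw [hsplit]
  rw [integral_finsetSum _ fun x _ => integrable_finsetSum _ fun y _ => hterm x y]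
  refine Finset.sum_congr rfl fun x _ => ?_
  rw [integral_finsetSum _ fun y _ => hterm x y]
  refine Finset.sum_congr rfl fun y _ => ?_
  rw [integral_prod_bilin _ (hfiber x) (hfiber y), integral_indicator (c.measurableSet_fiber x),
    integral_indicator (c.measurableSet_fiber y)]

lemma tendsto_integral_prod_bilin_comp [TopologicalSpace X] {k : X → X → E →L[ℝ] E →L[ℝ] ℝ}
    {C : ℝ} (hk : Continuous fun p : X × X => k p.1 p.2) (hkC : ∀ a b, ‖k a b‖ ≤ C)
    {c : ℕ → X → X} (hc : ∀ n, StronglyMeasurable (c n))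
    (hlim : ∀ a, Tendsto (fun n => c n a) atTop (𝓝 a)) {f : X → E} (hf : Integrable f μ) :
    Tendsto (fun n => ∫ p, k (c n p.1) (c n p.2) (f p.1) (f p.2) ∂μ.prod μ) atTop
      (𝓝 (∫ p, k p.1 p.2 (f p.1) (f p.2) ∂μ.prod μ)) := by
  refine tendsto_integral_of_dominated_convergence (fun p => C * ‖f p.1‖ * ‖f p.2‖)
    (fun n => ?_) (by simpa only [mul_assoc] using (hf.norm.mul_prod hf.norm).const_mul C)
    (fun n => ae_of_all _ fun p => (k _ _).le_of_opNorm₂_le_of_le (hkC _ _) le_rfl le_rfl)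
    (ae_of_all _ fun p => ?_)
  · have hκ : StronglyMeasurable fun p : X × X => k (c n p.1) (c n p.2) :=
      hk.comp_stronglyMeasurable
        (((hc n).comp_measurable measurable_fst).prodMk ((hc n).comp_measurable measurable_snd))
    exact (integrable_prod_bilin_apply hκ.aestronglyMeasurable (fun p => hkC _ _) hf).1
  · have hK := (hk.tendsto (p.1, p.2)).comp ((hlim p.1).prodMk_nhds (hlim p.2))
    exact ((continuous_id.clm_apply continuous_const).clm_apply
      continuous_const).continuousAt.tendsto.comp hK

theorem IsPosDefKernel.integral_integral_nonneg [TopologicalSpace X]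
    [TopologicalSpace.PseudoMetrizableSpace X] [SecondCountableTopology X]
    [OpensMeasurableSpace X] [SFinite μ] [CompleteSpace E] {k : X → X → E →L[ℝ] E →L[ℝ] ℝ}
    (hpd : IsPosDefKernel k) {C : ℝ} (hk : Continuous fun p : X × X => k p.1 p.2)
    (hkC : ∀ a b, ‖k a b‖ ≤ C) {f : X → E} (hf : Integrable f μ) :
    0 ≤ ∫ a, ∫ b, k a b (f a) (f b) ∂μ ∂μ := by
  have hid : StronglyMeasurable (id : X → X) := measurable_id.stronglyMeasurable
  have hkm : StronglyMeasurable fun p : X × X => k p.1 p.2 :=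
    hk.comp_stronglyMeasurable measurable_id.stronglyMeasurable
  rw [← integral_prod _ (integrable_prod_bilin_apply hkm.aestronglyMeasurable
    (fun p => hkC p.1 p.2) hf)]
  refine ge_of_tendsto (tendsto_integral_prod_bilin_comp hk hkC
    (fun n => (hid.approx n).stronglyMeasurable) hid.tendsto_approx hf) (.of_forall fun n => ?_)
  rw [integral_prod_bilin_comp_simpleFunc _ _ hf]
  exact hpd.sum_finset_nonneg _ _

lemma tendsto_integral_prod_normalizedTent_mul [PseudoMetricSpace X] [OpensMeasurableSpace X]
    [IsLocallyFiniteMeasure μ] [SFinite μ]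
    (hsupp : ∀ U : Set X, IsOpen U → U.Nonempty → 0 < μ U) (x y : X) {g : X × X → ℝ}
    (hgm : AEStronglyMeasurable g (μ.prod μ)) (hg : ContinuousAt g (x, y)) :
    Tendsto (fun δ => ∫ p, normalizedTent μ x δ p.1 * normalizedTent μ y δ p.2 * g p ∂μ.prod μ)
      (𝓝[>] 0) (𝓝 (g (x, y))) := by
  refine tendsto_integral_mul_of_support_subset_ball (.of_forall fun δ p =>
      mul_nonneg (normalizedTent_nonneg x δ p.1) (normalizedTent_nonneg y δ p.2))
    ?_ ?_ (fun r hr => ?_) hgm hg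
  · filter_upwards [eventually_integrable_normalizedTent (μ := μ) x,
      eventually_integrable_normalizedTent (μ := μ) y] with δ hx hy
    exact hx.mul_prod hy
  · filter_upwards [eventually_integral_normalizedTent hsupp x,
      eventually_integral_normalizedTent hsupp y] with δ hx hy
    rw [integral_prod_mul, hx, hy, one_mul]
  · filter_upwards [Ioo_mem_nhdsGT hr] with δ hδ p hp
    obtain ⟨hp1, hp2⟩ := mul_ne_zero_iff.1 hp
    rw [← ball_prod_same]
    exact ⟨ball_subset_ball hδ.2.le (support_normalizedTent_subset x δ hp1),
      ball_subset_ball hδ.2.le (support_normalizedTent_subset y δ hp2)⟩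

lemma integral_integral_bilin_sum_smul [SFinite μ] {k : X → X → E →L[ℝ] E →L[ℝ] ℝ} {C : ℝ}
    (hkm : AEStronglyMeasurable (fun p : X × X => k p.1 p.2) (μ.prod μ))
    (hkC : ∀ a b, ‖k a b‖ ≤ C) {ι : Type*} [Fintype ι] {ψ : ι → X → ℝ}
    (hψ : ∀ i, Integrable (ψ i) μ) (c : ι → E) :
    ∫ a, ∫ b, k a b (∑ i, ψ i a • c i) (∑ j, ψ j b • c j) ∂μ ∂μ =
      ∑ i, ∑ j, ∫ p, ψ i p.1 * ψ j p.2 * k p.1 p.2 (c i) (c j) ∂μ.prod μ := by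
  have hterm : ∀ i j, Integrable (fun p : X × X =>
      ψ i p.1 * ψ j p.2 * k p.1 p.2 (c i) (c j)) (μ.prod μ) := fun i j =>
    ((hψ i).mul_prod (hψ j)).mul_bdd
      ((hkm.apply_continuousLinearMap (c i)).apply_continuousLinearMap (c j))
      (ae_of_all _ fun p => (k _ _).le_of_opNorm₂_le_of_le (hkC _ _) le_rfl le_rfl)
  rw [← integral_prod _ (integrable_prod_bilin_apply hkm (fun p => hkC p.1 p.2)
    (integrable_finsetSum _ fun i _ => (hψ i).smul_const (c i)))]
  calc ∫ p, k p.1 p.2 (∑ i, ψ i p.1 • c i) (∑ j, ψ j p.2 • c j) ∂μ.prod μ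
      = ∫ p, ∑ i, ∑ j, ψ i p.1 * ψ j p.2 * k p.1 p.2 (c i) (c j) ∂μ.prod μ := by
        congr 1 with p
        simp only [map_sum, map_smul, _root_.sum_apply, _root_.smul_apply, smul_eq_mul,
          Finset.mul_sum]
        rw [Finset.sum_comm]
        exact Finset.sum_congr rfl fun _ _ => Finset.sum_congr rfl fun _ _ => by ring
    _ = _ := by
        rw [integral_finsetSum _ fun i _ => integrable_finsetSum _ fun j _ => hterm i j]
        exact Finset.sum_congr rfl fun i _ => integral_finsetSum _ fun j _ => hterm i j

theorem IsPosDefKernel.of_integral_integral_nonneg [PseudoMetricSpace X]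
    [SecondCountableTopology X] [OpensMeasurableSpace X] [IsLocallyFiniteMeasure μ]
    (hsupp : ∀ U : Set X, IsOpen U → U.Nonempty → 0 < μ U)
    {k : X → X → E →L[ℝ] E →L[ℝ] ℝ} {C : ℝ}
    (hk : Continuous fun p : X × X => k p.1 p.2) (hkC : ∀ a b, ‖k a b‖ ≤ C)
    (h : ∀ f : X → E, Continuous f → Integrable f μ → 0 ≤ ∫ a, ∫ b, k a b (f a) (f b) ∂μ ∂μ) :
    IsPosDefKernel k := by
  intro n x c
  have hkm : StronglyMeasurable fun p : X × X => k p.1 p.2 :=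
    hk.comp_stronglyMeasurable measurable_id.stronglyMeasurable
  have hkc : ∀ i j, Continuous fun p : X × X => k p.1 p.2 (c i) (c j) := fun i j =>
    (hk.clm_apply continuous_const).clm_apply continuous_const
  refine ge_of_tendsto (tendsto_finsetSum _ fun i _ => tendsto_finsetSum _ fun j _ =>
    tendsto_integral_prod_normalizedTent_mul hsupp (x i) (x j)
      (hkc i j).aestronglyMeasurable (hkc i j).continuousAt) ?_
  filter_upwards [eventually_all.2 fun i => eventually_integrable_normalizedTent (μ := μ) (x i)]
    with δ hδ
  rw [← integral_integral_bilin_sum_smul hkm.aestronglyMeasurable hkC hδ c]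
  exact h _ (continuous_finsetSum _ fun i _ => (continuous_normalizedTent _ _).smul
    continuous_const) (integrable_finsetSum _ fun i _ => (hδ i).smul_const _)

end Kernel

namespace Matrix
variable {N : ℕ}

noncomputable def toEuclideanBilin :
    Matrix (Fin N) (Fin N) ℝ →ₗ[ℝ]
      (EuclideanSpace ℝ (Fin N) →L[ℝ] EuclideanSpace ℝ (Fin N) →L[ℝ] ℝ) where
  toFun M := (innerSL ℝ).bilinearComp (.id ℝ _) (toEuclideanCLM (𝕜 := ℝ) M)
  map_add' M M' := by ext; simp [inner_add_right]
  map_smul' c M := by ext; simp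

lemma toEuclideanBilin_apply (M : Matrix (Fin N) (Fin N) ℝ) (u v : EuclideanSpace ℝ (Fin N)) :
    toEuclideanBilin M u v = u ⬝ᵥ M *ᵥ v := by
  simp [toEuclideanBilin, inner_toEuclideanCLM]

lemma continuous_toEuclideanBilin : Continuous (toEuclideanBilin (N := N)) :=
  LinearMap.continuous_of_finiteDimensional
    (F' := EuclideanSpace ℝ (Fin N) →L[ℝ] EuclideanSpace ℝ (Fin N) →L[ℝ] ℝ) _

lemma norm_toEuclideanCLM_apply_le (M : Matrix (Fin N) (Fin N) ℝ) (v : EuclideanSpace ℝ (Fin N)) :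
    ‖toEuclideanCLM (𝕜 := ℝ) M v‖ ≤ frobNorm M * ‖v‖ := by
  simp only [EuclideanSpace.norm_eq, ofLp_toEuclideanCLM, Real.norm_eq_abs, sq_abs, frobNorm]
  rw [← Real.sqrt_mul' _ (Finset.sum_nonneg fun j _ => sq_nonneg _), Finset.sum_mul]
  refine Real.sqrt_le_sqrt (Finset.sum_le_sum fun i _ => ?_)
  exact Finset.sum_mul_sq_le_sq_mul_sq Finset.univ (M i) v.ofLp

lemma norm_toEuclideanBilin_le (M : Matrix (Fin N) (Fin N) ℝ) :
    ‖toEuclideanBilin M‖ ≤ frobNorm M := by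
  refine ContinuousLinearMap.opNorm_le_bound₂ _ (Real.sqrt_nonneg _) fun u v => ?_
  calc ‖toEuclideanBilin M u v‖ = |inner ℝ u (toEuclideanCLM (𝕜 := ℝ) M v)| := rfl
    _ ≤ ‖u‖ * ‖toEuclideanCLM (𝕜 := ℝ) M v‖ := abs_real_inner_le_norm _ _
    _ ≤ ‖u‖ * (frobNorm M * ‖v‖) := by gcongr; exact norm_toEuclideanCLM_apply_le M v
    _ = frobNorm M * ‖u‖ * ‖v‖ := by ring

end Matrix

theorem stmt_13_general {X : Type*} [MetricSpace X] [TopologicalSpace.SeparableSpace X]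
    [MeasurableSpace X] [BorelSpace X]
    (μ : Measure X) [IsLocallyFiniteMeasure μ]
    (hsupp : ∀ U : Set X, IsOpen U → U.Nonempty → 0 < μ U)
    {N : ℕ} (K : X → X → Matrix (Fin N) (Fin N) ℝ)
    (hKcont : Continuous (fun p : X × X => K p.1 p.2))
    (hKbdd : ∃ C : ℝ, ∀ x y : X, frobNorm (K x y) ≤ C) :
    List.TFAE [
      (∀ (n : ℕ) (x : Fin n → X) (c : Fin n → Fin N → ℝ),
        0 ≤ ∑ i : Fin n, ∑ j : Fin n, c i ⬝ᵥ ((K (x i) (x j)) *ᵥ c j)),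
      (∀ f : X → EuclideanSpace ℝ (Fin N), Continuous f → Integrable f μ →
        0 ≤ ∫ x, ∫ y, (f x) ⬝ᵥ ((K x y) *ᵥ (f y)) ∂μ ∂μ),
      (∀ f : X → EuclideanSpace ℝ (Fin N), Integrable f μ →
        0 ≤ ∫ x, ∫ y, (f x) ⬝ᵥ ((K x y) *ᵥ (f y)) ∂μ ∂μ)] := by
  have := UniformSpace.secondCountable_of_separable X
  obtain ⟨C, hC⟩ := hKbdd
  set k : X → X → _ := fun a b => toEuclideanBilin (K a b)
  have hk : Continuous fun p : X × X => k p.1 p.2 :=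
    continuous_toEuclideanBilin.comp hKcont
  have hkC : ∀ a b, ‖k a b‖ ≤ C := fun a b => (norm_toEuclideanBilin_le _).trans (hC a b)
  tfae_have 3 → 2 := fun h3 f _ hf => h3 f hf
  tfae_have 2 → 1 := fun h2 n x c => by
    simpa [k, toEuclideanBilin_apply] using IsPosDefKernel.of_integral_integral_nonneg hsupp hk
      hkC (by simpa [k, toEuclideanBilin_apply] using h2) n x (fun i => WithLp.toLp 2 (c i))
  tfae_have 1 → 3 := fun h1 f hf => by
    have hpd : IsPosDefKernel k := fun n x c => by
      simpa [k, toEuclideanBilin_apply] using h1 n x (fun i => (c i).ofLp)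
    simpa [k, toEuclideanBilin_apply] using hpd.integral_integral_nonneg hk hkC hf
  tfae_finish

theorem stmt_13 {X : Type*} [MetricSpace X] [TopologicalSpace.SeparableSpace X]
    [MeasurableSpace X] [BorelSpace X]
    (μ : Measure X) [IsLocallyFiniteMeasure μ]
    (hsupp : ∀ U : Set X, IsOpen U → U.Nonempty → 0 < μ U)
    {N : ℕ} (hN : 1 ≤ N) (K : X → X → Matrix (Fin N) (Fin N) ℝ)
    (hKcont : Continuous (fun p : X × X => K p.1 p.2))
    (hKbdd : ∃ C : ℝ, ∀ x y : X, frobNorm (K x y) ≤ C)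
    (hsym : ∀ x y : X, K x y = (K y x)ᵀ) :
    List.TFAE [
      (∀ (n : ℕ) (x : Fin n → X) (c : Fin n → Fin N → ℝ),
        0 ≤ ∑ i : Fin n, ∑ j : Fin n, c i ⬝ᵥ ((K (x i) (x j)) *ᵥ c j)),
      (∀ f : X → EuclideanSpace ℝ (Fin N), Continuous f → Integrable f μ →
        0 ≤ ∫ x, ∫ y, (f x) ⬝ᵥ ((K x y) *ᵥ (f y)) ∂μ ∂μ),
      (∀ f : X → EuclideanSpace ℝ (Fin N), Integrable f μ →
        0 ≤ ∫ x, ∫ y, (f x) ⬝ᵥ ((K x y) *ᵥ (f y)) ∂μ ∂μ)] :=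
  stmt_13_general μ hsupp K hKcont hKbdd
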